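/- Since the map T(x,i) = (Y(x,i), b_0(x,i)) on X̃ × {1,…,N} is a bijection, the uniform distribution on X̃ (configurations on ℤ_N with fixed particle counts per line) is a stationary distribution for the continuous-time multiline process whose generator applies the jump x ↦ Y(x,i) at rate 1 for each i ∈ ℤ_N. -/
import Mathlib

/-- Forward TASEP swap at `(p-1,p)`: minimum (particle, `true`) first. -/
def swapAt {N : ℕ} (u : ZMod N → Bool) (p : ZMod N) : ZMod N → Bool :=
  fun j => if j = p - 1 then u (p - 1) || u p
           else if j = p then u (p - 1) && u p
           else u j

/-- Forward bell cascade: `bells x i k = b_{n-k}`; `b_n = i`,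
`b_m = b_{m+1}` if `x_{m+1}(b_{m+1})` is a particle, else `b_{m+1} + 1`. -/
def bells {N n : ℕ} (x : Fin n → ZMod N → Bool) (i : ZMod N) : ℕ → ZMod N
  | 0 => i
  | k + 1 =>
      let p := bells x i k
      if h : n - 1 - k < n then (if x ⟨n - 1 - k, h⟩ p then p else p + 1) else p

/-- Forward jump `Y(x,i)`: swap at `(b_m - 1, b_m)` on line `m`. -/
def Ymap {N n : ℕ} (x : Fin n → ZMod N → Bool) (i : ZMod N) : Fin n → ZMod N → Bool :=
  fun t => swapAt (x t) (bells x i (n - 1 - (t : ℕ)))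

/-- reading the swapped configuration at (new bell - 1) recovers `u i`. -/
lemma swapAt_at_bell {N : ℕ} (u : ZMod N → Bool) (i : ZMod N) :
    swapAt u i ((if u i then i else i + 1) - 1) = u i := by
  by_cases h : u i
  · simp [h, swapAt]
  · have h0 : u i = false := by simpa using h
    simp only [h0, Bool.false_eq_true, if_false, add_sub_cancel_right]
    by_cases h2 : i = i - 1
    · simp [swapAt, ← h2, h0]
    · simp [swapAt, h2, h0]

lemma swapAt_of_false {N : ℕ} {u : ZMod N → Bool} {i : ZMod N} (h : u i = false) :
    swapAt u i = u := by
  funext j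
  by_cases hj1 : j = i - 1
  · simp [swapAt, hj1, h]
  · by_cases hj : j = i
    · have hni : ¬ i = i - 1 := hj ▸ hj1
      simp [swapAt, hj, hni, h]
    · simp [swapAt, hj1, hj]

/-- one-step injectivity: the swapped line and the next bell determine `(u,i)`. -/
lemma step_inj {N : ℕ} {u v : ZMod N → Bool} {i i' : ZMod N}
    (h1 : swapAt u i = swapAt v i')
    (h2 : (if u i then i else i + 1) = (if v i' then i' else i' + 1)) :
    u = v ∧ i = i' := by
  have hu : swapAt u i ((if u i then i else i + 1) - 1) = u i := swapAt_at_bell u i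
  have hv : swapAt v i' ((if v i' then i' else i' + 1) - 1) = v i' := swapAt_at_bell v i'
  have huv : u i = v i' := by rw [← hu, ← hv, h1, h2]
  have hii : i = i' := by
    by_cases h : u i
    · have h' : v i' = true := by rw [← huv, h]
      simpa [h, h'] using h2
    · have h' : v i' = false := by rw [← huv]; simpa using h
      simp only [h, h', Bool.false_eq_true, if_false] at h2
      exact add_right_cancel h2
  subst hii
  refine ⟨?_, rfl⟩
  by_cases h : u i
  · have h' : v i = true := by rw [← huv, h]
    funext j
    by_cases hj : j = i
    · rw [hj, h, h']
    · by_cases hj1 : j = i - 1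
      · have hne : ¬ (i = i - 1) := fun hc => hj (hj1.trans hc.symm)
        have e1 : swapAt u i i = u (i - 1) := by simp [swapAt, hne, h]
        have e2 : swapAt v i i = v (i - 1) := by simp [swapAt, hne, h']
        rw [hj1, ← e1, ← e2, h1]
      · have e1 : swapAt u i j = u j := by simp [swapAt, hj, hj1]
        have e2 : swapAt v i j = v j := by simp [swapAt, hj, hj1]
        rw [← e1, ← e2, h1]
  · have h0 : u i = false := by simpa using h
    have h' : v i = false := by rw [← huv, h0]
    calc u = swapAt u i := (swapAt_of_false h0).symm
      _ = swapAt v i := h1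
      _ = v := swapAt_of_false h'

lemma bells_castSucc {N n : ℕ} (x : Fin (n+1) → ZMod N → Bool) (i : ZMod N) :
    ∀ k, k ≤ n → bells x i (k+1) = bells (fun t => x t.castSucc) (bells x i 1) k := by
  intro k
  induction k with
  | zero => intro _; rfl
  | succ k ih =>
    intro hk
    have hk' : k ≤ n := Nat.le_of_succ_le hk
    have e1 : (n + 1) - 1 - (k + 1) = n - 1 - k := by omega
    have hlt : n - 1 - k < n := by omega
    have hlt' : n - 1 - k < n + 1 := by omega
    show (let p := bells x i (k+1);
      if h : (n+1) - 1 - (k+1) < n + 1 then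
        (if x ⟨(n+1) - 1 - (k+1), h⟩ p then p else p + 1) else p) = _
    show _ = (let p := bells (fun t => x t.castSucc) (bells x i 1) k;
      if h : n - 1 - k < n then
        (if (fun t : Fin n => x t.castSucc) ⟨n - 1 - k, h⟩ p then p else p + 1) else p)
    simp only [e1, dif_pos hlt, dif_pos hlt', ih hk']
    rfl

lemma Ymap_castSucc {N n : ℕ} (x : Fin (n+1) → ZMod N → Bool) (i : ZMod N) (t : Fin n) :
    Ymap (fun s => x s.castSucc) (bells x i 1) t = Ymap x i t.castSucc := by
  have ht : (t : ℕ) < n := t.isLt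
  have e : (n + 1) - 1 - ((t : ℕ)) = (n - 1 - (t : ℕ)) + 1 := by omega
  show swapAt (x t.castSucc) (bells (fun s => x s.castSucc) (bells x i 1) (n - 1 - (t : ℕ)))
      = swapAt (x t.castSucc) (bells x i ((n+1) - 1 - (t : ℕ)))
  rw [e, bells_castSucc x i (n - 1 - (t : ℕ)) (by omega)]

lemma Ymap_last {N n : ℕ} (x : Fin (n+1) → ZMod N → Bool) (i : ZMod N) :
    Ymap x i (Fin.last n) = swapAt (x (Fin.last n)) i := by
  show swapAt (x (Fin.last n)) (bells x i ((n+1) - 1 - n)) = _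
  rw [Nat.add_sub_cancel, Nat.sub_self]
  rfl

lemma bells_one {N n : ℕ} (x : Fin (n+1) → ZMod N → Bool) (i : ZMod N) :
    bells x i 1 = if x (Fin.last n) i then i else i + 1 := by
  show (if h : (n+1) - 1 - 0 < n + 1 then
      (if x ⟨(n+1) - 1 - 0, h⟩ i then i else i + 1) else i) = _
  have h : (n+1) - 1 - 0 < n + 1 := by omega
  rw [dif_pos h]
  rfl

/-- global injectivity of `T(x,i) = (Y(x,i), b_0(x,i))`. -/
lemma T_inj {N : ℕ} : ∀ {n : ℕ} (x x' : Fin n → ZMod N → Bool) (i i' : ZMod N),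
    Ymap x i = Ymap x' i' → bells x i n = bells x' i' n → x = x' ∧ i = i' := by
  intro n
  induction n with
  | zero =>
    intro x x' i i' _ hb
    exact ⟨funext fun t => t.elim0, hb⟩
  | succ n ih =>
    intro x x' i i' hY hb
    have hYr : Ymap (fun t : Fin n => x t.castSucc) (bells x i 1)
        = Ymap (fun t : Fin n => x' t.castSucc) (bells x' i' 1) := by
      funext t
      rw [Ymap_castSucc, Ymap_castSucc, hY]
    have hbr : bells (fun t : Fin n => x t.castSucc) (bells x i 1) n
        = bells (fun t : Fin n => x' t.castSucc) (bells x' i' 1) n := by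
      rw [← bells_castSucc x i n le_rfl, ← bells_castSucc x' i' n le_rfl, hb]
    obtain ⟨hxeq, hbeq⟩ := ih _ _ _ _ hYr hbr
    have htop : swapAt (x (Fin.last n)) i = swapAt (x' (Fin.last n)) i' := by
      rw [← Ymap_last, ← Ymap_last, hY]
    have hbell : (if x (Fin.last n) i then i else i + 1)
        = (if x' (Fin.last n) i' then i' else i' + 1) := by
      rw [← bells_one, ← bells_one, hbeq]
    obtain ⟨hlast, hi⟩ := step_inj htop hbell
    refine ⟨?_, hi⟩
    funext t
    refine Fin.lastCases ?_ ?_ t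
    · exact hlast
    · intro s
      exact congrFun hxeq s

open Finset in
lemma card_swapAt {N : ℕ} [NeZero N] (u : ZMod N → Bool) (p : ZMod N)
    [DecidablePred fun j => swapAt u p j = true] [DecidablePred fun j => u j = true] :
    (univ.filter (fun j => swapAt u p j = true)).card
      = (univ.filter (fun j => u j = true)).card := by
  have key : swapAt u p = u ∘ ⇑(Equiv.swap (p-1) p) ∨ swapAt u p = u := by
    by_cases h1 : u (p - 1)
    · right
      funext j
      by_cases hj1 : j = p - 1
      · simp [swapAt, hj1, h1]
      · by_cases hj : j = p
        · have hne : ¬ p = p - 1 := fun hc => hj1 (hj.trans hc)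
          simp [swapAt, hj, hne, h1]
        · simp [swapAt, hj1, hj]
    · by_cases h2 : u p
      · left
        have h1' : u (p - 1) = false := by simpa using h1
        funext j
        by_cases hj1 : j = p - 1
        · simp [swapAt, hj1, h1', h2, Equiv.swap_apply_left]
        · by_cases hj : j = p
          · have hne : ¬ p = p - 1 := fun hc => hj1 (hj.trans hc)
            simp [swapAt, hj, hne, h1', h2, Equiv.swap_apply_right]
          · simp [swapAt, hj1, hj, Equiv.swap_apply_of_ne_of_ne hj1 hj]
      · right
        have h1' : u (p - 1) = false := by simpa using h1
        have h2' : u p = false := by simpa using h2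
        funext j
        by_cases hj1 : j = p - 1
        · simp [swapAt, hj1, h1', h2']
        · by_cases hj : j = p
          · simp [swapAt, hj1, hj, h1', h2']
          · simp [swapAt, hj1, hj]
  rcases key with h | h
  · simp only [h]
    apply Finset.card_bij (fun a _ => Equiv.swap (p-1) p a)
    · intro a ha
      simp only [Finset.mem_filter, Finset.mem_univ, true_and] at ha ⊢
      exact ha
    · intro a _ b _ hab
      exact (Equiv.swap (p-1) p).injective hab
    · intro b hb
      simp only [Finset.mem_filter, Finset.mem_univ, true_and] at hb ⊢
      refine ⟨Equiv.swap (p-1) p b, ?_, ?_⟩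
      · simpa [Function.comp] using hb
      · simp
  · simp only [h]

open Classical in
/-- the uniform distribution on `X̃` (configurations with exactly `q m`
particles on line `m`) is stationary for the multiline process which, at rate 1 for each
site `i`, jumps from `x` to `Y(x,i)`: for every state `y ∈ X̃`, the total rate
`N · μ(y)` of leaving `y` equals the total rate `Σ_i Σ_x μ(x) 1{Y(x,i)=y}` of entering
`y` (self-jumps included on both sides), where `μ` is uniform on `X̃`. -/
theorem stmt_8 (N n : ℕ) [NeZero N] (q : Fin n → ℕ)
    (Xtil : Finset (Fin n → ZMod N → Bool))
    (hXtil : Xtil = Finset.univ.filter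
      (fun x => ∀ m : Fin n, (Finset.univ.filter (fun i => x m i = true)).card = q m)) :
    ∀ y ∈ Xtil,
      (N : ℝ) * (1 / (Xtil.card : ℝ))
        = ∑ i : ZMod N, ∑ x ∈ Xtil,
            (1 / (Xtil.card : ℝ)) * (if Ymap x i = y then 1 else 0) := by
  intro y hy
  classical
  -- the jump preserves the particle counts
  have hmem : ∀ x ∈ Xtil, ∀ i : ZMod N, Ymap x i ∈ Xtil := by
    intro x hx i
    rw [hXtil] at hx ⊢
    simp only [Finset.mem_filter, Finset.mem_univ, true_and] at hx ⊢
    intro m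
    rw [← hx m]
    exact card_swapAt (x m) _
  set A : Finset (ZMod N × (Fin n → ZMod N → Bool)) := Finset.univ ×ˢ Xtil with hA
  set T : ZMod N × (Fin n → ZMod N → Bool) → ZMod N × (Fin n → ZMod N → Bool) :=
    fun p => (bells p.2 p.1 n, Ymap p.2 p.1) with hT
  have hTinj : Function.Injective T := by
    intro p1 p2 hpq
    simp only [hT, Prod.mk.injEq] at hpq
    obtain ⟨hx, hi⟩ := T_inj p1.2 p2.2 p1.1 p2.1 hpq.2 hpq.1
    exact Prod.ext hi hx
  have himg : A.image T = A := by
    apply Finset.eq_of_subset_of_card_le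
    · intro p hp
      simp only [Finset.mem_image] at hp
      obtain ⟨a, ha, rfl⟩ := hp
      simp only [hA, Finset.mem_product, Finset.mem_univ, true_and] at ha ⊢
      exact hmem a.2 ha a.1
    · rw [Finset.card_image_of_injective _ hTinj]
  have hcard : (A.filter (fun p => Ymap p.2 p.1 = y)).card
      = (A.filter (fun p => p.2 = y)).card := by
    apply Finset.card_bij (fun p _ => T p)
    · intro p hp
      simp only [Finset.mem_filter] at hp ⊢
      refine ⟨?_, hp.2⟩
      simp only [hA, Finset.mem_product, Finset.mem_univ, true_and] at hp ⊢
      exact hmem p.2 hp.1 p.1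
    · intro a _ b _ hab
      exact hTinj hab
    · intro b hb
      simp only [Finset.mem_filter] at hb
      have : b ∈ A.image T := by rw [himg]; exact hb.1
      simp only [Finset.mem_image] at this
      obtain ⟨a, ha, rfl⟩ := this
      refine ⟨a, ?_, rfl⟩
      simp only [Finset.mem_filter]
      exact ⟨ha, hb.2⟩
  have hfib : (A.filter (fun p => p.2 = y)) = (Finset.univ : Finset (ZMod N)) ×ˢ {y} := by
    ext p
    simp only [Finset.mem_filter, hA, Finset.mem_product, Finset.mem_univ, true_and,
      Finset.mem_singleton]
    constructor
    · rintro ⟨_, h2⟩; exact h2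
    · rintro h2; exact ⟨h2 ▸ hy, h2⟩
  have hcardN : ((A.filter (fun p => Ymap p.2 p.1 = y)).card : ℝ) = (N : ℝ) := by
    rw [hcard, hfib, Finset.card_product, Finset.card_singleton, Finset.card_univ,
      ZMod.card, mul_one]
  calc (N : ℝ) * (1 / (Xtil.card : ℝ))
      = (1 / (Xtil.card : ℝ)) * ((A.filter (fun p => Ymap p.2 p.1 = y)).card : ℝ) := by
        rw [hcardN]; ring
    _ = ∑ p ∈ A, (1 / (Xtil.card : ℝ)) * (if Ymap p.2 p.1 = y then 1 else 0) := by
        rw [← Finset.sum_boole, ← Finset.mul_sum]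
    _ = ∑ i : ZMod N, ∑ x ∈ Xtil,
            (1 / (Xtil.card : ℝ)) * (if Ymap x i = y then 1 else 0) := by
        rw [hA, Finset.sum_product]
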